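/- For any complex number z and any positive integer n, |d_z(n²)| ≤ d_{(|z|+1)²}(n), where d_w denotes the w-th divisor function. -/

import Mathlib

/-- The `z`-th divisor function for complex `z`, multiplicative with
`d_z(p^a) = z(z+1)···(z+a-1)/a!`. -/
noncomputable def dComplex (z : ℂ) (n : ℕ) : ℂ :=
  ∏ p ∈ n.factorization.support,
    (∏ j ∈ Finset.range (n.factorization p), (z + j)) / (Nat.factorial (n.factorization p))

/-- The `w`-th divisor function for real `w`, multiplicative with
`d_w(p^a) = w(w+1)···(w+a-1)/a!`. -/
noncomputable def dReal (w : ℝ) (n : ℕ) : ℝ :=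
  ∏ p ∈ n.factorization.support,
    (∏ j ∈ Finset.range (n.factorization p), (w + j)) / (Nat.factorial (n.factorization p))

/-!
Both sides are multiplicative with the same prime support, so it suffices to compare the local
factors at `p^a`: `|d_z(p^{2a})| ≤ d_{|z|}(p^{2a}) ≤ d_{(|z|+1)^2}(p^a)`. The second inequality
follows by induction on `a`, since raising `a` by one multiplies the left side by
`(w+2a)(w+2a+1)/((2a+1)(2a+2))` and the right side by `((w+1)^2+a)/(a+1)`.
-/

open Finset
open scoped Nat

lemma prod_range_two_mul_add_mul_factorial_le {w : ℝ} (hw : 0 ≤ w) (a : ℕ) :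
    (∏ j ∈ range (2 * a), (w + j)) * a ! ≤
      (∏ j ∈ range a, ((w + 1) ^ 2 + j)) * (2 * a)! := by
  induction a with
  | zero => simp
  | succ a ih =>
    set P := ∏ j ∈ range (2 * a), (w + j)
    set Q := ∏ j ∈ range a, ((w + 1) ^ 2 + j)
    have hP : 0 ≤ P := prod_nonneg fun j _ => by positivity
    have hQ : 0 ≤ Q := prod_nonneg fun j _ => by positivity
    have hratio : (w + 2 * a) * (w + (2 * a + 1)) * (a + 1) ≤
        ((w + 1) ^ 2 + a) * ((2 * a + 1) * (2 * a + 1 + 1)) := by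
      have ha : (0 : ℝ) ≤ a := a.cast_nonneg
      nlinarith [sq_nonneg w, mul_nonneg hw ha, mul_nonneg (mul_nonneg hw hw) ha]
    rw [show 2 * (a + 1) = 2 * a + 1 + 1 by ring, prod_range_succ, prod_range_succ,
      prod_range_succ, Nat.factorial_succ, Nat.factorial_succ, Nat.factorial_succ]
    push_cast
    calc P * (w + 2 * a) * (w + (2 * a + 1)) * ((a + 1) * a !)
        = (P * a !) * ((w + 2 * a) * (w + (2 * a + 1)) * (a + 1)) := by ring
      _ ≤ (Q * (2 * a)!) * (((w + 1) ^ 2 + a) * ((2 * a + 1) * (2 * a + 1 + 1))) :=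
          mul_le_mul ih hratio (by positivity) (by positivity)
      _ = Q * ((w + 1) ^ 2 + a) * ((2 * a + 1 + 1) * ((2 * a + 1) * (2 * a)!)) := by ring

lemma norm_prod_range_add_le {𝕜 : Type*} [RCLike 𝕜] (z : 𝕜) (m : ℕ) :
    ‖∏ j ∈ range m, (z + j)‖ ≤ ∏ j ∈ range m, (‖z‖ + j) := by
  rw [norm_prod]
  refine prod_le_prod (fun j _ => norm_nonneg _) fun j _ => ?_
  simpa using norm_add_le z (j : 𝕜)

lemma norm_prod_range_two_mul_add_div_factorial_le (z : ℂ) (a : ℕ) :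
    ‖(∏ j ∈ range (2 * a), (z + j)) / ((2 * a)! : ℂ)‖ ≤
      (∏ j ∈ range a, ((‖z‖ + 1) ^ 2 + j)) / a ! := by
  rw [norm_div, Complex.norm_natCast]
  calc ‖∏ j ∈ range (2 * a), (z + j)‖ / (2 * a)!
      ≤ (∏ j ∈ range (2 * a), (‖z‖ + j)) / (2 * a)! := by
        gcongr; exact norm_prod_range_add_le z _
    _ ≤ (∏ j ∈ range a, ((‖z‖ + 1) ^ 2 + j)) / a ! := by
        rw [div_le_div_iff₀ (by positivity) (by positivity)]
        exact prod_range_two_mul_add_mul_factorial_le (norm_nonneg z) a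

theorem stmt_3_general (z : ℂ) (n : ℕ) :
    ‖dComplex z (n ^ 2)‖ ≤ dReal ((‖z‖ + 1) ^ 2) n := by
  have hfac : (n ^ 2).factorization = 2 • n.factorization := Nat.factorization_pow n 2
  have hsupp : (n ^ 2).factorization.support = n.factorization.support := by
    rw [hfac]; exact Finsupp.support_smul_eq two_ne_zero
  rw [dComplex, dReal, hsupp, norm_prod]
  refine prod_le_prod (fun p _ => norm_nonneg _) fun p _ => ?_
  rw [hfac, Finsupp.smul_apply, smul_eq_mul]
  exact norm_prod_range_two_mul_add_div_factorial_le z _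

theorem stmt_3 (z : ℂ) (n : ℕ) (hn : 0 < n) :
    ‖dComplex z (n ^ 2)‖ ≤ dReal ((‖z‖ + 1) ^ 2) n :=
  stmt_3_general z n
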